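/- arXiv:1204.6345 — 5 statements merged into one kernel-verified Lean document; each statement's English description precedes it below -/
import Mathlib

section
/- Let A be an m × n real matrix whose columns are indexed by pairs (j,k), j = 1,…,m, k = 1,…,n_j, such that every representative submatrix of A (one column chosen from each block j) has determinant of the same nonzero sign. Then every nonzero vector x in the row space of A has a block j such that all coordinates x_{(j,1)},…,x_{(j,n_j)} are nonzero and of the same sign. -/
/-!
If no block of `x = vᵀA` had entries of one strict sign, each block would contain an entry `≥ 0`
and an entry `≤ 0`, so some nonzero nonnegative combination of the columns of that block is
annihilated by `vᵀ`. These combinations form a square matrix `N` with `vᵀN = 0`. By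
multilinearity of the determinant, `det N` is a nonnegative combination, with at least one
positive coefficient, of the determinants of the representative submatrices, which all have the
same strict sign; hence `det N ≠ 0` and `v = 0`.
-/

open Matrix Finset

theorem exists_nonneg_ne_zero_dotProduct_eq_zero {R : Type*} [CommRing R] [LinearOrder R]
    [IsStrictOrderedRing R] {κ : Type*} [Fintype κ] [DecidableEq κ] {y : κ → R}
    (hneg : ∃ k, y k ≤ 0) (hpos : ∃ k, 0 ≤ y k) :
    ∃ w : κ → R, 0 ≤ w ∧ w ≠ 0 ∧ y ⬝ᵥ w = 0 := by
  by_cases hzero : ∃ k, y k = 0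
  · obtain ⟨k, hk⟩ := hzero
    exact ⟨Pi.single k 1, Pi.single_nonneg.2 zero_le_one, by simp, by simp [hk]⟩
  simp only [not_exists] at hzero
  obtain ⟨q, hq⟩ := hneg
  obtain ⟨p, hp⟩ := hpos
  replace hq : 0 < -y q := neg_pos.2 (hq.lt_of_ne (hzero q))
  replace hp : 0 < y p := hp.lt_of_ne (Ne.symm (hzero p))
  have hsingle_nonneg : 0 ≤ (Pi.single q (y p) : κ → R) := Pi.single_nonneg.2 hp.le
  refine ⟨Pi.single q (y p) + Pi.single p (-y q), ?_, ?_, ?_⟩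
  · exact add_nonneg hsingle_nonneg (Pi.single_nonneg.2 hq.le)
  · refine Function.ne_iff.2 ⟨p, (add_pos_of_nonneg_of_pos (hsingle_nonneg p) ?_).ne'⟩
    simpa using hq
  · simp only [dotProduct_add, dotProduct_single]
    ring

namespace Matrix

variable {ι : Type*} [Fintype ι] {κ : ι → Type*} [∀ j, Fintype (κ j)] {R : Type*}

def representativeSubmatrix (A : Matrix ι (Σ j, κ j) R) (r : ∀ j, κ j) : Matrix ι ι R :=
  A.submatrix id fun j => ⟨j, r j⟩

def blockCombination [NonUnitalNonAssocSemiring R] (A : Matrix ι (Σ j, κ j) R)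
    (w : ∀ j, κ j → R) : Matrix ι ι R :=
  of fun i j => ∑ k, w j k * A i ⟨j, k⟩

theorem vecMul_blockCombination [NonUnitalCommSemiring R] (A : Matrix ι (Σ j, κ j) R)
    (w : ∀ j, κ j → R) (v : ι → R) (j : ι) :
    (v ᵥ* A.blockCombination w) j = (fun k => (v ᵥ* A) ⟨j, k⟩) ⬝ᵥ w j := by
  simp only [vecMul, dotProduct, blockCombination, of_apply, mul_sum, sum_mul]
  rw [sum_comm]
  exact sum_congr rfl fun k _ => sum_congr rfl fun i _ => by ac_rfl

theorem det_blockCombination [DecidableEq ι] [CommRing R] (A : Matrix ι (Σ j, κ j) R)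
    (w : ∀ j, κ j → R) :
    (A.blockCombination w).det =
      ∑ r : ∀ j, κ j, (∏ j, w j (r j)) * (A.representativeSubmatrix r).det := by
  have hrows : (A.blockCombination w)ᵀ = fun j => ∑ k, w j k • fun i => A i ⟨j, k⟩ := by
    ext j i
    simp [blockCombination]
  rw [← det_transpose, hrows]
  change (detRowAlternating : (ι → R) [⋀^ι]→ₗ[R] R).toMultilinearMap _ = _
  rw [MultilinearMap.map_sum]
  refine sum_congr rfl fun r _ => ?_
  rw [MultilinearMap.map_smul_univ, smul_eq_mul, ← det_transpose (representativeSubmatrix _ r)]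
  rfl

theorem det_blockCombination_ne_zero [DecidableEq ι] [CommRing R] [LinearOrder R]
    [IsStrictOrderedRing R] {A : Matrix ι (Σ j, κ j) R} {w : ∀ j, κ j → R}
    (hA : (∀ r, 0 < (A.representativeSubmatrix r).det) ∨
      (∀ r, (A.representativeSubmatrix r).det < 0))
    (hw_nonneg : ∀ j, 0 ≤ w j) (hw : ∀ j, w j ≠ 0) :
    (A.blockCombination w).det ≠ 0 := by
  have hpos_entry : ∀ j, ∃ k, 0 < w j k := fun j =>
    (Function.ne_iff.1 (hw j)).imp fun k hk => (hw_nonneg j k).lt_of_ne' hk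
  choose r₀ hr₀ using hpos_entry
  have hprod_nonneg : ∀ r : ∀ j, κ j, 0 ≤ ∏ j, w j (r j) := fun r =>
    prod_nonneg fun j _ => hw_nonneg j (r j)
  have hprod_pos : 0 < ∏ j, w j (r₀ j) := prod_pos fun j _ => hr₀ j
  rw [det_blockCombination]
  rcases hA with hpos | hneg
  · exact (sum_pos' (fun r _ => mul_nonneg (hprod_nonneg r) (hpos r).le)
      ⟨r₀, mem_univ _, mul_pos hprod_pos (hpos r₀)⟩).ne'
  · exact (sum_neg' (fun r _ => mul_nonpos_of_nonneg_of_nonpos (hprod_nonneg r) (hneg r).le)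
      ⟨r₀, mem_univ _, mul_neg_of_pos_of_neg hprod_pos (hneg r₀)⟩).ne

end Matrix

/-- Sign-preserving property: if all representative submatrices of a
block-column matrix `A` have determinants of the same nonzero sign, then any
nonzero vector in the row space of `A` has a block on which all its
coordinates are nonzero and of the same sign. -/
theorem p_property_sign_preserving (m : ℕ) (n : Fin m → ℕ)
    (A : Matrix (Fin m) ((j : Fin m) × Fin (n j)) ℝ)
    (hP : (∀ r : (j : Fin m) → Fin (n j),
            0 < (Matrix.of fun i j => A i ⟨j, r j⟩ : Matrix (Fin m) (Fin m) ℝ).det) ∨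
          (∀ r : (j : Fin m) → Fin (n j),
            (Matrix.of fun i j => A i ⟨j, r j⟩ : Matrix (Fin m) (Fin m) ℝ).det < 0))
    (v : Fin m → ℝ) (hv : Matrix.vecMul v A ≠ 0) :
    ∃ j : Fin m,
      (∀ k : Fin (n j), 0 < Matrix.vecMul v A ⟨j, k⟩) ∨
      (∀ k : Fin (n j), Matrix.vecMul v A ⟨j, k⟩ < 0) := by
  by_contra hcon
  have hmixed : ∀ j, (∃ k, (v ᵥ* A) ⟨j, k⟩ ≤ 0) ∧ ∃ k, 0 ≤ (v ᵥ* A) ⟨j, k⟩ := by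
    simpa only [not_exists, not_or, not_forall, not_lt] using hcon
  choose w hw_nonneg hw hvAw using fun j =>
    exists_nonneg_ne_zero_dotProduct_eq_zero (hmixed j).1 (hmixed j).2
  have hvN : v ᵥ* A.blockCombination w = 0 :=
    funext fun j => (vecMul_blockCombination A w v j).trans (hvAw j)
  have hv0 : v = 0 := by
    by_contra hv0
    exact det_blockCombination_ne_zero hP hw_nonneg hw
      (exists_vecMul_eq_zero_iff.1 ⟨v, hv0, hvN⟩)
  exact hv (by rw [hv0, zero_vecMul])
end

section
/- Let A be an m × n matrix with the P-property with columns indexed by pairs (j,k). Suppose there exists an m × m matrix X and a strictly positive p ∈ ℝᵐ such that (XA)_{i,(j,k)} > 0 for i = j, (XA)_{i,(j,k)} ≤ 0 for i ≠ j, and pᵀXA > 0 entrywise. Then there exists b ∈ ℝᵐ such that for every representative submatrix C of A, the solution of C x = b is entrywise strictly positive. -/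
/-!
For every representative submatrix `C`, `M = X * C` is a Z-matrix with `pᵀ M > 0`, and such
an `M` is monotone: if `x` had negative entries, let `q` agree with `p` on them and vanish
elsewhere; then `qᵀ M` is positive exactly where `x` is negative and nonpositive elsewhere, so
`0 ≤ qᵀ (M x) = (qᵀ M) x < 0`. Monotonicity makes `M` invertible, hence `X` is invertible, and
`b = X⁻¹ 1` works for every `C` because `C x = b` means `M x = 1`.
-/

open Matrix Finset

namespace Matrix

variable {ι R : Type*} [Fintype ι]

def IsZMatrix [Zero R] [LE R] (M : Matrix ι ι R) : Prop :=
  Pairwise fun i j => M i j ≤ 0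

section OrderedRing

variable [CommRing R] [LinearOrder R] [IsStrictOrderedRing R]
  {M : Matrix ι ι R} {p x : ι → R}

theorem IsZMatrix.vecMul_apply_nonpos (hM : M.IsZMatrix) {q : ι → R} (hq : 0 ≤ q) {j : ι}
    (hqj : q j = 0) : (q ᵥ* M) j ≤ 0 :=
  sum_nonpos fun i _ => by
    by_cases hij : i = j
    · simp [hij, hqj]
    · exact mul_nonpos_of_nonneg_of_nonpos (hq i) (hM hij)

theorem IsZMatrix.nonneg_of_mulVec_nonneg (hM : M.IsZMatrix) (hp : ∀ i, 0 < p i)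
    (hpM : ∀ j, 0 < (p ᵥ* M) j) (hx : 0 ≤ M *ᵥ x) : 0 ≤ x := by
  by_contra hneg
  obtain ⟨i₀, hi₀⟩ : ∃ i, x i < 0 := by simpa [Pi.le_def] using hneg
  set q : ι → R := fun i => if x i < 0 then p i else 0
  have hq : 0 ≤ q := fun i => by by_cases h : x i < 0 <;> simp [q, h, (hp i).le]
  have hpq : 0 ≤ p - q := fun i => by by_cases h : x i < 0 <;> simp [q, h, (hp i).le]
  have hqM_pos : ∀ j, x j < 0 → 0 < (q ᵥ* M) j := fun j hj => by
    have hrest : ((p - q) ᵥ* M) j ≤ 0 := hM.vecMul_apply_nonpos hpq (by simp [q, hj])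
    rw [sub_vecMul, Pi.sub_apply] at hrest
    linarith [hpM j]
  have hterm : ∀ j, (q ᵥ* M) j * x j ≤ 0 := fun j => by
    by_cases hj : x j < 0
    · exact (mul_neg_of_pos_of_neg (hqM_pos j hj) hj).le
    · exact mul_nonpos_of_nonpos_of_nonneg (hM.vecMul_apply_nonpos hq (by simp [q, hj]))
        (not_lt.mp hj)
  have hneg_sum : q ⬝ᵥ (M *ᵥ x) < 0 := by
    rw [dotProduct_mulVec]
    exact sum_neg' (fun j _ => hterm j)
      ⟨i₀, mem_univ _, mul_neg_of_pos_of_neg (hqM_pos i₀ hi₀) hi₀⟩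
  exact (dotProduct_nonneg_of_nonneg hq hx).not_gt hneg_sum

theorem IsZMatrix.pos_of_mulVec_pos (hM : M.IsZMatrix) (hp : ∀ i, 0 < p i)
    (hpM : ∀ j, 0 < (p ᵥ* M) j) (hx : ∀ i, 0 < (M *ᵥ x) i) (i : ι) : 0 < x i := by
  have hx₀ : 0 ≤ x := hM.nonneg_of_mulVec_nonneg hp hpM fun i => (hx i).le
  refine (hx₀ i).lt_of_ne fun hxi => (hx i).not_ge ?_
  -- the diagonal term vanishes and all others are `≤ 0`
  refine sum_nonpos fun j _ => ?_
  by_cases hij : i = j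
  · simp [← hij, ← hxi]
  · exact mul_nonpos_of_nonpos_of_nonneg (hM hij) (hx₀ j)

end OrderedRing

theorem IsZMatrix.isUnit_det [Field R] [LinearOrder R] [IsStrictOrderedRing R] [DecidableEq ι]
    {M : Matrix ι ι R} {p : ι → R} (hM : M.IsZMatrix) (hp : ∀ i, 0 < p i)
    (hpM : ∀ j, 0 < (p ᵥ* M) j) : IsUnit M.det := by
  rw [← isUnit_iff_isUnit_det, ← mulVec_injective_iff_isUnit]
  refine (injective_iff_map_eq_zero M.mulVecLin).mpr fun x (hx : M *ᵥ x = 0) => ?_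
  have hmono : ∀ y : ι → R, M *ᵥ y = 0 → 0 ≤ y := fun y hy =>
    hM.nonneg_of_mulVec_nonneg hp hpM hy.ge
  exact le_antisymm (neg_nonneg.mp (hmono (-x) (by rw [mulVec_neg, hx, neg_zero])))
    (hmono x hx)

end Matrix

theorem Z_form_pos_vector_implies_good_b_general (m : ℕ) (n : Fin m → ℕ)
    (A : Matrix (Fin m) ((j : Fin m) × Fin (n j)) ℝ)
    (X : Matrix (Fin m) (Fin m) ℝ) (p : Fin m → ℝ) (hp : ∀ i, 0 < p i)
    (hnonpos : ∀ i : Fin m, ∀ j : Fin m, ∀ k : Fin (n j), i ≠ j → (X * A) i ⟨j, k⟩ ≤ 0)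
    (hpXA : ∀ c : (j : Fin m) × Fin (n j), 0 < Matrix.vecMul p (X * A) c) :
    ∃ b : Fin m → ℝ, ∀ r : (j : Fin m) → Fin (n j), ∀ x : Fin m → ℝ,
      (Matrix.of fun i j => A i ⟨j, r j⟩ : Matrix (Fin m) (Fin m) ℝ).mulVec x = b →
        ∀ i, 0 < x i := by
  set C : ((j : Fin m) → Fin (n j)) → Matrix (Fin m) (Fin m) ℝ :=
    fun r => Matrix.of fun i j => A i ⟨j, r j⟩
  have hXC : ∀ r, X * C r = Matrix.of fun i j => (X * A) i ⟨j, r j⟩ := fun r => by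
    ext i j; simp [C, mul_apply]
  have hZ : ∀ r, (X * C r).IsZMatrix := fun r i j hij => by
    simpa [hXC] using hnonpos i j (r j) hij
  have hpM : ∀ r j, 0 < (p ᵥ* (X * C r)) j := fun r j => by
    simpa [hXC, vecMul, dotProduct] using hpXA ⟨j, r j⟩
  rcases isEmpty_or_nonempty ((j : Fin m) → Fin (n j)) with hempty | ⟨⟨r₀⟩⟩
  · exact ⟨0, fun r => isEmptyElim r⟩
  · have hX : IsUnit X.det :=
      isUnit_of_mul_isUnit_left (det_mul X (C r₀) ▸ (hZ r₀).isUnit_det hp (hpM r₀))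
    refine ⟨X⁻¹ *ᵥ 1, fun r x hx => (hZ r).pos_of_mulVec_pos hp (hpM r) fun i => ?_⟩
    rw [← mulVec_mulVec, hx, mulVec_mulVec, mul_nonsing_inv _ hX, one_mulVec]
    exact one_pos

/-- Theorem 2, (2) ⟹ (3): if some `X` brings `A` into Z-form and a positive `p`
has `pᵀXA > 0`, then there is `b` whose representative systems all have
strictly positive solutions. -/
theorem Z_form_pos_vector_implies_good_b (m : ℕ) (n : Fin m → ℕ)
    (A : Matrix (Fin m) ((j : Fin m) × Fin (n j)) ℝ)
    (hP : (∀ r : (j : Fin m) → Fin (n j),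
            0 < (Matrix.of fun i j => A i ⟨j, r j⟩ : Matrix (Fin m) (Fin m) ℝ).det) ∨
          (∀ r : (j : Fin m) → Fin (n j),
            (Matrix.of fun i j => A i ⟨j, r j⟩ : Matrix (Fin m) (Fin m) ℝ).det < 0))
    (X : Matrix (Fin m) (Fin m) ℝ) (p : Fin m → ℝ) (hp : ∀ i, 0 < p i)
    (hpos : ∀ i : Fin m, ∀ j : Fin m, ∀ k : Fin (n j), i = j → 0 < (X * A) i ⟨j, k⟩)
    (hnonpos : ∀ i : Fin m, ∀ j : Fin m, ∀ k : Fin (n j), i ≠ j → (X * A) i ⟨j, k⟩ ≤ 0)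
    (hpXA : ∀ c : (j : Fin m) × Fin (n j), 0 < Matrix.vecMul p (X * A) c) :
    ∃ b : Fin m → ℝ, ∀ r : (j : Fin m) → Fin (n j), ∀ x : Fin m → ℝ,
      (Matrix.of fun i j => A i ⟨j, r j⟩ : Matrix (Fin m) (Fin m) ℝ).mulVec x = b →
        ∀ i, 0 < x i :=
  Z_form_pos_vector_implies_good_b_general m n A X p hp hnonpos hpXA
end

section
/- Let A be an m × n matrix with the P-property, and suppose there is b ∈ ℝᵐ such that for every representative submatrix C of A the solution to C x = b is positive. Then, with X̄ denoting the complementary Z-form matrix of A, there exists a strictly positive vector p ∈ ℝᵐ with pᵀ(X̄A) > 0 entrywise. -/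
/-!
Write `B = X̄A`. By a Gordan-type alternative it suffices to show that no nonzero `y ≥ 0` has
`B y ≤ 0`. Given such a `y`, put `x j = ∑ k, y (j, k)` and mix the columns of each block `j` of `A`
with the weights `y (j, ·) / x j` into a square matrix `Ā`. By multilinearity of the determinant,
`det Ā` and the Cramer numerators of `Ā v = b` are convex combinations of those of the
representative submatrices, so `Ā v = b` has a positive solution. Now `X̄Ā` has nonpositive
off-diagonal entries, sends `v > 0` to `X̄b > 0` and sends `x ≥ 0` to `B y ≤ 0`, and for such a
Z-matrix this forces `x = 0`, hence `y = 0`.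
-/

open Finset Matrix

theorem exists_mem_stdSimplex_eq_sum_smul {ι : Type*} [Fintype ι] [Nonempty ι] {y : ι → ℝ}
    (hy : 0 ≤ y) : ∃ w ∈ stdSimplex ℝ ι, y = (∑ i, y i) • w := by
  classical
  rcases (sum_nonneg fun i _ => hy i).eq_or_lt with hsum | hsum
  · have hy0 : y = 0 := funext fun i =>
      (sum_eq_zero_iff_of_nonneg fun i _ => hy i).1 hsum.symm i (mem_univ i)
    exact ⟨_, single_mem_stdSimplex ℝ (Classical.arbitrary ι), by simp [hy0]⟩
  · refine ⟨(∑ i, y i)⁻¹ • y, ⟨fun i => ?_, ?_⟩, ?_⟩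
    · exact mul_nonneg (inv_nonneg.2 hsum.le) (hy i)
    · simp [← mul_sum, inv_mul_cancel₀ hsum.ne']
    · rw [smul_smul, mul_inv_cancel₀ hsum.ne', one_smul]

namespace Matrix

/-- A Gordan-type alternative, obtained by separating `0` from the image of the standard simplex
under `(y, z) ↦ B y + z`. -/
theorem exists_pos_vecMul_pos_of_mulVec_nonpos {m n : Type*} [Fintype m] [Fintype n]
    (B : Matrix m n ℝ) (hB : ∀ y : n → ℝ, 0 ≤ y → B *ᵥ y ≤ 0 → y = 0) :
    ∃ p : m → ℝ, (∀ i, 0 < p i) ∧ ∀ c, 0 < (p ᵥ* B) c := by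
  classical
  let L : (n ⊕ m → ℝ) →ₗ[ℝ] (m → ℝ) :=
    B.mulVecLin ∘ₗ LinearMap.funLeft ℝ ℝ Sum.inl + LinearMap.funLeft ℝ ℝ Sum.inr
  have hL : ∀ v, L v = B *ᵥ (v ∘ Sum.inl) + v ∘ Sum.inr := fun v => rfl
  have h0 : (0 : m → ℝ) ∉ L '' stdSimplex ℝ (n ⊕ m) := by
    rintro ⟨v, ⟨hv₀, hv₁⟩, hLv⟩
    have hy : v ∘ Sum.inl = 0 := hB _ (fun c => hv₀ _) fun i => by
      have := congrFun hLv i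
      simp only [hL, Pi.add_apply, Function.comp_apply, Pi.zero_apply] at this
      show _ ≤ (0 : ℝ)
      linarith [hv₀ (Sum.inr i)]
    have hz : v ∘ Sum.inr = 0 := by simpa [hL, hy] using hLv
    have hy' : ∀ c, v (Sum.inl c) = 0 := fun c => congrFun hy c
    have hz' : ∀ i, v (Sum.inr i) = 0 := fun i => congrFun hz i
    simp [Fintype.sum_sum_type, hy', hz'] at hv₁
  obtain ⟨f, u, hf0, hfu⟩ := geometric_hahn_banach_point_closed
    ((convex_stdSimplex ℝ _).linear_image L)
    ((isCompact_stdSimplex ℝ _).image L.continuous_of_finiteDimensional).isClosed h0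
  have hpos : ∀ a, 0 < f (L (Pi.single a 1)) := fun a =>
    (map_zero f ▸ hf0).trans (hfu _ ⟨_, single_mem_stdSimplex ℝ a, rfl⟩)
  set p : m → ℝ := fun i => f (Pi.single i 1)
  have hf : ∀ v, f v = ∑ i, v i * p i := fun v => by
    conv_lhs => rw [pi_eq_sum_univ' v]
    simp [map_sum, p]
  have hLinl : ∀ c, L (Pi.single (Sum.inl c) 1) = B.col c := fun c => by
    ext i; simp [hL, mulVec, dotProduct, Pi.single_apply]
  have hLinr : ∀ i, L (Pi.single (Sum.inr i) 1) = Pi.single i 1 := fun i => by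
    ext j; simp [hL, mulVec, dotProduct, Pi.single_apply]
  refine ⟨p, fun i => by simpa [hLinr] using hpos (Sum.inr i), fun c => ?_⟩
  simpa [hLinl, hf, vecMul, dotProduct, mul_comm] using hpos (Sum.inl c)

section SquareMatrix

variable {ι : Type*} [Fintype ι]

theorem mulVec_apply_nonpos_of_offDiag_nonpos {Z : Matrix ι ι ℝ} (hZ : ∀ i j, i ≠ j → Z i j ≤ 0)
    {z : ι → ℝ} (hz : 0 ≤ z) {i : ι} (hzi : z i = 0) : (Z *ᵥ z) i ≤ 0 :=
  sum_nonpos fun j _ => by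
    by_cases h : i = j
    · simp [← h, hzi]
    · exact mul_nonpos_of_nonpos_of_nonneg (hZ i j h) (hz j)

theorem eq_zero_of_mulVec_nonpos_of_offDiag_nonpos {Z : Matrix ι ι ℝ}
    (hZ : ∀ i j, i ≠ j → Z i j ≤ 0) {v : ι → ℝ} (hv : 0 ≤ v) (hZv : ∀ i, 0 < (Z *ᵥ v) i)
    {x : ι → ℝ} (hx : 0 ≤ x) (hZx : Z *ᵥ x ≤ 0) : x = 0 := by
  by_contra hx0
  have hsupp : (univ.filter fun j => 0 < x j).Nonempty := by
    obtain ⟨j, hj⟩ := Function.ne_iff.1 hx0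
    exact ⟨j, mem_filter.2 ⟨mem_univ _, (hx j).lt_of_ne' hj⟩⟩
  obtain ⟨j₀, hj₀, hmin⟩ := exists_min_image _ (fun j => v j / x j) hsupp
  have hxj₀ : 0 < x j₀ := (mem_filter.1 hj₀).2
  -- `v - t • x` is nonnegative and vanishes at `j₀`, so `Z` can only send it below zero there.
  set t := v j₀ / x j₀
  have hz : 0 ≤ v - t • x := fun j => by
    rcases (hx j).eq_or_lt with hxj | hxj
    · simpa [← hxj] using hv j
    · have := hmin j (mem_filter.2 ⟨mem_univ _, hxj⟩)
      simpa [sub_nonneg, ← le_div_iff₀ hxj] using this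
  have hzj₀ : (v - t • x) j₀ = 0 := by simp [t, div_mul_cancel₀ _ hxj₀.ne']
  have hZz := mulVec_apply_nonpos_of_offDiag_nonpos hZ hz hzj₀
  rw [mulVec_sub, mulVec_smul] at hZz
  have ht : 0 ≤ t := div_nonneg (hv j₀) hxj₀.le
  have := mul_nonpos_of_nonneg_of_nonpos ht (hZx j₀)
  simp only [Pi.sub_apply, Pi.smul_apply, smul_eq_mul] at hZz
  linarith [hZv j₀]

variable [DecidableEq ι]

theorem det_updateCol_mulVec {R : Type*} [CommRing R] (M : Matrix ι ι R) (x : ι → R) (j : ι) :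
    (M.updateCol j (M *ᵥ x)).det = x j * M.det := by
  rw [← smul_eq_mul, ← det_updateCol_sum]
  congr; ext k; simp [mulVec, dotProduct, mul_comm]

theorem exists_mulVec_eq_of_det_ne_zero {K : Type*} [Field K] {M : Matrix ι ι K} (hM : M.det ≠ 0)
    (b : ι → K) : ∃ x, M *ᵥ x = b :=
  mulVec_surjective_iff_isUnit.2 ((isUnit_iff_isUnit_det M).2 hM.isUnit) b

/-- Cramer's rule, read as a sign condition. -/
theorem exists_pos_mulVec_eq {M : Matrix ι ι ℝ} {b : ι → ℝ} {s : ℝ} (hM : 0 < s * M.det)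
    (hMb : ∀ j, 0 < s * (M.updateCol j b).det) : ∃ x, M *ᵥ x = b ∧ ∀ j, 0 < x j := by
  obtain ⟨x, rfl⟩ := exists_mulVec_eq_of_det_ne_zero (right_ne_zero_of_mul hM.ne') b
  refine ⟨x, rfl, fun j => pos_of_mul_pos_left ?_ hM.le⟩
  simpa [det_updateCol_mulVec, mul_left_comm] using hMb j

end SquareMatrix

section BlockColumns

variable {R ι : Type*} {κ : ι → Type*}

def repMatrix (A : Matrix ι (Σ j, κ j) R) (r : ∀ j, κ j) : Matrix ι ι R :=
  of fun i j => A i ⟨j, r j⟩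

theorem repMatrix_updateCol [DecidableEq ι] (A : Matrix ι (Σ j, κ j) R) (r : ∀ j, κ j) (j₀ : ι)
    (b : ι → R) :
    (repMatrix A r).updateCol j₀ b = repMatrix (of fun i c => if c.1 = j₀ then b i else A i c) r := by
  ext i j
  by_cases h : j = j₀ <;> simp [repMatrix, h]

theorem mul_repMatrix [Fintype ι] [Semiring R] (X : Matrix ι ι R) (A : Matrix ι (Σ j, κ j) R)
    (r : ∀ j, κ j) : X * repMatrix A r = repMatrix (X * A) r := by
  ext i j; simp [repMatrix, mul_apply]

theorem mulVec_apply_pos_of_zForm [Fintype ι] [DecidableEq ι] [∀ j, Nonempty (κ j)]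
    {A : Matrix ι (Σ j, κ j) ℝ} {b : ι → ℝ}
    (hsol : ∀ r, ∃ x, repMatrix A r *ᵥ x = b ∧ ∀ j, 0 < x j) {X : Matrix ι ι ℝ}
    (hdiag : ∀ i k, 0 < (X * A) i ⟨i, k⟩) (hzero : ∀ i j, i ≠ j → ∃ k, (X * A) i ⟨j, k⟩ = 0)
    (i : ι) : 0 < (X *ᵥ b) i := by
  -- Off the diagonal, pick the columns of `X * A` that vanish in row `i`.
  choose k hk using hzero i
  let r : ∀ j, κ j := fun j => if h : i = j then Classical.arbitrary (κ j) else k j h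
  obtain ⟨x, hx, hxpos⟩ := hsol r
  rw [← hx, mulVec_mulVec, mul_repMatrix, mulVec, dotProduct, sum_eq_single i]
  · exact mul_pos (hdiag i _) (hxpos i)
  · intro j _ hji
    simp [repMatrix, r, Ne.symm hji, hk]
  · simp

variable [∀ j, Fintype (κ j)]

def colMix [Semiring R] (A : Matrix ι (Σ j, κ j) R) (w : ∀ j, κ j → R) : Matrix ι ι R :=
  of fun i j => ∑ k, w j k * A i ⟨j, k⟩

theorem colMix_updateCol [DecidableEq ι] [Semiring R] (A : Matrix ι (Σ j, κ j) R)
    {w : ∀ j, κ j → R} {j₀ : ι} (hw : ∑ k, w j₀ k = 1) (b : ι → R) :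
    (colMix A w).updateCol j₀ b = colMix (of fun i c => if c.1 = j₀ then b i else A i c) w := by
  ext i j
  by_cases h : j = j₀
  · subst h; simp [colMix, ← sum_mul, hw]
  · simp [colMix, h]

variable [Fintype ι]

theorem mul_colMix [CommSemiring R] (X : Matrix ι ι R) (A : Matrix ι (Σ j, κ j) R)
    (w : ∀ j, κ j → R) : X * colMix A w = colMix (X * A) w := by
  ext i j
  simp only [colMix, of_apply, mul_apply, Finset.mul_sum]
  rw [sum_comm]
  simp only [mul_left_comm]

theorem colMix_mulVec [CommSemiring R] (A : Matrix ι (Σ j, κ j) R) (w : ∀ j, κ j → R)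
    (x : ι → R) : colMix A w *ᵥ x = A *ᵥ fun c => w c.1 c.2 * x c.1 := by
  ext i
  simp only [mulVec, dotProduct, colMix, of_apply, sum_mul, Fintype.sum_sigma]
  exact sum_congr rfl fun j _ => sum_congr rfl fun k _ => by ring

variable [DecidableEq ι]

theorem det_colMix [CommRing R] (A : Matrix ι (Σ j, κ j) R) (w : ∀ j, κ j → R) :
    (colMix A w).det = ∑ r : ∀ j, κ j, (∏ j, w j (r j)) * (repMatrix A r).det := by
  have hcols : (colMix A w)ᵀ = fun j => ∑ k, w j k • fun i => A i ⟨j, k⟩ := by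
    ext j i; simp [colMix, Finset.sum_apply]
  rw [← det_transpose, hcols]
  refine ((detRowAlternating (R := R)).toMultilinearMap.map_sum _).trans
    (Finset.sum_congr rfl fun r _ => ?_)
  rw [← det_transpose (repMatrix A r)]
  exact (detRowAlternating (R := R)).toMultilinearMap.map_smul_univ _ _

theorem det_colMix_pos {A : Matrix ι (Σ j, κ j) ℝ} {w : ∀ j, κ j → ℝ} {s : ℝ}
    (hw : ∀ j, w j ∈ stdSimplex ℝ (κ j)) (hA : ∀ r, 0 < s * (repMatrix A r).det) :
    0 < s * (colMix A w).det := by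
  have hprod₀ : ∀ r : ∀ j, κ j, 0 ≤ ∏ j, w j (r j) := fun r => prod_nonneg fun j _ => (hw j).1 _
  have hsum : ∑ r : ∀ j, κ j, ∏ j, w j (r j) = 1 := by
    rw [← Fintype.prod_sum]; simp [fun j => (hw j).2]
  obtain ⟨r₀, -, hr₀⟩ := (sum_pos_iff_of_nonneg fun r _ => hprod₀ r).1 (hsum ▸ one_pos)
  rw [det_colMix, Finset.mul_sum]
  refine sum_pos' (fun r _ => ?_) ⟨r₀, mem_univ _, ?_⟩
  · rw [mul_left_comm]; exact mul_nonneg (hprod₀ r) (hA r).le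
  · rw [mul_left_comm]; exact mul_pos hr₀ (hA r₀)

theorem exists_pos_colMix_mulVec_eq {A : Matrix ι (Σ j, κ j) ℝ} {b : ι → ℝ} {s : ℝ}
    (hA : ∀ r, 0 < s * (repMatrix A r).det)
    (hAb : ∀ r j, 0 < s * ((repMatrix A r).updateCol j b).det)
    {w : ∀ j, κ j → ℝ} (hw : ∀ j, w j ∈ stdSimplex ℝ (κ j)) :
    ∃ x, colMix A w *ᵥ x = b ∧ ∀ j, 0 < x j := by
  refine exists_pos_mulVec_eq (det_colMix_pos hw hA) fun j => ?_
  rw [colMix_updateCol A (hw j).2]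
  exact det_colMix_pos hw fun r => repMatrix_updateCol A r j b ▸ hAb r j

theorem eq_zero_of_mul_mulVec_nonpos [∀ j, Nonempty (κ j)] {A : Matrix ι (Σ j, κ j) ℝ}
    {b : ι → ℝ} {s : ℝ} (hA : ∀ r, 0 < s * (repMatrix A r).det)
    (hAb : ∀ r j, 0 < s * ((repMatrix A r).updateCol j b).det) {X : Matrix ι ι ℝ}
    (hoff : ∀ i j k, i ≠ j → (X * A) i ⟨j, k⟩ ≤ 0) (hXb : ∀ i, 0 < (X *ᵥ b) i)
    {y : (Σ j, κ j) → ℝ} (hy : 0 ≤ y) (hXAy : (X * A) *ᵥ y ≤ 0) : y = 0 := by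
  choose w hw hyw using fun j => exists_mem_stdSimplex_eq_sum_smul fun k => hy ⟨j, k⟩
  set x : ι → ℝ := fun j => ∑ k, y ⟨j, k⟩
  have hy_eq : y = fun c => w c.1 c.2 * x c.1 := funext fun ⟨j, k⟩ => by
    simpa [mul_comm] using congrFun (hyw j) k
  obtain ⟨v, hv, hvpos⟩ := exists_pos_colMix_mulVec_eq hA hAb hw
  have hx : x = 0 := eq_zero_of_mulVec_nonpos_of_offDiag_nonpos (Z := colMix (X * A) w)
    (fun i j hij => sum_nonpos fun k _ =>
      mul_nonpos_of_nonneg_of_nonpos ((hw j).1 k) (hoff i j k hij))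
    (fun j => (hvpos j).le) (by rwa [← mul_colMix, ← mulVec_mulVec, hv])
    (fun j => sum_nonneg fun k _ => hy _) (by rwa [colMix_mulVec, ← hy_eq])
  ext c
  simp [hy_eq, hx]

end BlockColumns

end Matrix

/-- Theorem 2, (3) ⟹ (1): if some `b` makes all representative systems of `A`
have positive solutions, then there is a positive `p` with `pᵀ(X̄A) > 0` for
the complementary Z-form matrix `X̄`. -/
theorem good_b_implies_pos_vector_for_Z_form (m : ℕ) (n : Fin m → ℕ)
    (A : Matrix (Fin m) ((j : Fin m) × Fin (n j)) ℝ)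
    (hP : (∀ r : (j : Fin m) → Fin (n j),
            0 < (Matrix.of fun i j => A i ⟨j, r j⟩ : Matrix (Fin m) (Fin m) ℝ).det) ∨
          (∀ r : (j : Fin m) → Fin (n j),
            (Matrix.of fun i j => A i ⟨j, r j⟩ : Matrix (Fin m) (Fin m) ℝ).det < 0))
    (b : Fin m → ℝ)
    (hb : ∀ r : (j : Fin m) → Fin (n j), ∀ x : Fin m → ℝ,
      (Matrix.of fun i j => A i ⟨j, r j⟩ : Matrix (Fin m) (Fin m) ℝ).mulVec x = b →
        ∀ i, 0 < x i)
    (X : Matrix (Fin m) (Fin m) ℝ)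
    (hpos : ∀ i : Fin m, ∀ j : Fin m, ∀ k : Fin (n j), i = j → 0 < (X * A) i ⟨j, k⟩)
    (hnonpos : ∀ i : Fin m, ∀ j : Fin m, ∀ k : Fin (n j), i ≠ j → (X * A) i ⟨j, k⟩ ≤ 0)
    (hzero : ∀ i : Fin m, ∀ j : Fin m, i ≠ j → ∃ k : Fin (n j), (X * A) i ⟨j, k⟩ = 0) :
    ∃ p : Fin m → ℝ, (∀ i, 0 < p i) ∧
      ∀ c : (j : Fin m) × Fin (n j), 0 < Matrix.vecMul p (X * A) c := by
  obtain ⟨s, hs⟩ : ∃ s : ℝ, ∀ r, 0 < s * (repMatrix A r).det :=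
    hP.elim (fun h => ⟨1, fun r => by simpa [repMatrix] using h r⟩)
      fun h => ⟨-1, fun r => by simpa [repMatrix] using h r⟩
  have hsol : ∀ r, ∃ x, repMatrix A r *ᵥ x = b ∧ ∀ j, 0 < x j := fun r => by
    obtain ⟨x, hx⟩ := exists_mulVec_eq_of_det_ne_zero (right_ne_zero_of_mul (hs r).ne') b
    exact ⟨x, hx, hb r x hx⟩
  have hsb : ∀ r j, 0 < s * ((repMatrix A r).updateCol j b).det := fun r j => by
    obtain ⟨x, rfl, hx⟩ := hsol r
    rw [det_updateCol_mulVec, mul_left_comm]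
    exact mul_pos (hx j) (hs r)
  refine exists_pos_vecMul_pos_of_mulVec_nonpos (X * A) fun y hy hXAy => ?_
  by_contra hy0
  obtain ⟨c, -⟩ := Function.ne_iff.1 hy0
  have : ∀ j, Nonempty (Fin (n j)) := fun j =>
    if h : c.1 = j then h ▸ ⟨c.2⟩ else ⟨(hzero c.1 j h).choose⟩
  exact hy0 (eq_zero_of_mul_mulVec_nonpos hs hsb hnonpos
    (mulVec_apply_pos_of_zForm hsol (fun i k => hpos i i k rfl) hzero) hy hXAy)
end

section
/- Let A be an m × n matrix (columns indexed by pairs (j,k)) with the P-property, and let c ∈ ℝⁿ. If v₁ and v₂ both satisfy cᵀ - vᵀA ≥ 0 entrywise and, for each j, (cᵀ - vᵀA)_{(j,k)} = 0 for at least one k ∈ {1,…,n_j}, then v₁ = v₂. -/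
/-!
Put `d = v₁ - v₂`. In block `j`, `dᵀA` is `≥ 0` on a column where `cᵀ - v₁ᵀA` vanishes and `≤ 0` on
one where `cᵀ - v₂ᵀA` vanishes, so `dᵀ` annihilates some point `g_j` of the segment joining these
two columns. Since the determinant is linear in each column separately, the set of matrices whose
`j`-th column lies in the convex hull of block `j` still has determinants of one strict sign; so the
matrix with columns `g_j` is nonsingular and `d = 0`.
-/

open Matrix Function Set

theorem Matrix.det_mem_of_rows_mem_convexHull {R ι : Type*} [CommRing R] [PartialOrder R]
    [IsOrderedRing R] [Fintype ι] [DecidableEq ι] {C : Set R} (hC : Convex R C)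
    {S : ι → Set (ι → R)} (hS : ∀ f : ι → ι → R, (∀ j, f j ∈ S j) → (of f).det ∈ C)
    {g : ι → ι → R} (hg : ∀ j, g j ∈ convexHull R (S j)) : (of g).det ∈ C := by
  suffices key : ∀ s : Finset ι, ∀ g : ι → ι → R, (∀ j ∈ s, g j ∈ convexHull R (S j)) →
      (∀ j ∉ s, g j ∈ S j) → (of g).det ∈ C from
    key Finset.univ g (fun j _ => hg j) (by simp)
  intro s
  induction s using Finset.induction_on with
  | empty => exact fun g _ hgS => hS g fun j => hgS j (Finset.notMem_empty j)
  | insert a s ha ih =>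
    intro g hconv hgS
    have hconvex : Convex R {x | (of (update g a x)).det ∈ C} :=
      hC.linear_preimage (detRowAlternating.toMultilinearMap.toLinearMap g a)
    have hsub : S a ⊆ {x | (of (update g a x)).det ∈ C} := by
      intro x hx
      refine ih _ (fun j hj => ?_) (fun j hj => ?_)
      · rw [update_of_ne (ne_of_mem_of_not_mem hj ha)]
        exact hconv j (Finset.mem_insert_of_mem hj)
      · rcases eq_or_ne j a with rfl | hja
        · simpa using hx
        · rw [update_of_ne hja]
          exact hgS j (by simp [hja, hj])
    simpa using convexHull_min hsub hconvex (hconv a (Finset.mem_insert_self a s))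

theorem LinearMap.exists_mem_segment_eq_zero {E : Type*} [AddCommGroup E] [Module ℝ E]
    (φ : E →ₗ[ℝ] ℝ) {a b : E} (ha : 0 ≤ φ a) (hb : φ b ≤ 0) :
    ∃ x ∈ segment ℝ a b, φ x = 0 := by
  have h0 : (0 : ℝ) ∈ segment ℝ (φ a) (φ b) := by
    rw [segment_symm, segment_eq_Icc (hb.trans ha)]
    exact ⟨hb, ha⟩
  rwa [← φ.coe_toAffineMap, ← image_segment] at h0

/-- Uniqueness in the Cottle–Dantzig theorem: the vector `v` with
`cᵀ - vᵀA ≥ 0` and a zero in each block is unique. -/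
theorem cottle_dantzig_uniqueness (m : ℕ) (n : Fin m → ℕ)
    (A : Matrix (Fin m) ((j : Fin m) × Fin (n j)) ℝ)
    (hP : (∀ r : (j : Fin m) → Fin (n j),
            0 < (Matrix.of fun i j => A i ⟨j, r j⟩ : Matrix (Fin m) (Fin m) ℝ).det) ∨
          (∀ r : (j : Fin m) → Fin (n j),
            (Matrix.of fun i j => A i ⟨j, r j⟩ : Matrix (Fin m) (Fin m) ℝ).det < 0))
    (c : ((j : Fin m) × Fin (n j)) → ℝ)
    (v₁ v₂ : Fin m → ℝ)
    (h₁ : ∀ col, 0 ≤ c col - Matrix.vecMul v₁ A col)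
    (h₁z : ∀ j : Fin m, ∃ k : Fin (n j), c ⟨j, k⟩ - Matrix.vecMul v₁ A ⟨j, k⟩ = 0)
    (h₂ : ∀ col, 0 ≤ c col - Matrix.vecMul v₂ A col)
    (h₂z : ∀ j : Fin m, ∃ k : Fin (n j), c ⟨j, k⟩ - Matrix.vecMul v₂ A ⟨j, k⟩ = 0) :
    v₁ = v₂ := by
  choose k₁ hk₁ using h₁z
  choose k₂ hk₂ using h₂z
  obtain ⟨C, hC, hC0, hrep⟩ : ∃ C : Set ℝ, Convex ℝ C ∧ 0 ∉ C ∧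
      ∀ r : (j : Fin m) → Fin (n j), (of fun j => Aᵀ ⟨j, r j⟩).det ∈ C :=
    hP.elim
      (fun h => ⟨Ioi 0, convex_Ioi 0, self_notMem_Ioi, fun r => (det_transpose _).trans_gt (h r)⟩)
      (fun h => ⟨Iio 0, convex_Iio 0, self_notMem_Iio, fun r => (det_transpose _).trans_lt (h r)⟩)
  have hcol : ∀ col, (v₁ - v₂) ⬝ᵥ Aᵀ col = (v₁ ᵥ* A) col - (v₂ ᵥ* A) col :=
    fun col => sub_dotProduct _ _ _
  have hroot : ∀ j, ∃ x ∈ segment ℝ (Aᵀ ⟨j, k₁ j⟩) (Aᵀ ⟨j, k₂ j⟩), (v₁ - v₂) ⬝ᵥ x = 0 :=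
    fun j => (dotProductBilin ℝ ℝ (v₁ - v₂)).exists_mem_segment_eq_zero
      (by simp only [dotProductBilin_apply_apply, hcol]; linarith [h₂ ⟨j, k₁ j⟩, hk₁ j])
      (by simp only [dotProductBilin_apply_apply, hcol]; linarith [h₁ ⟨j, k₂ j⟩, hk₂ j])
  choose g hg hg0 using hroot
  have hdet : (of g).det ∈ C := by
    refine det_mem_of_rows_mem_convexHull hC (S := fun j => range fun k => Aᵀ ⟨j, k⟩) ?_
      fun j => segment_subset_convexHull (mem_range_self _) (mem_range_self _) (hg j)
    intro f hf
    choose r hr using hf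
    simpa only [← funext hr] using hrep r
  have hker : of g *ᵥ (v₁ - v₂) = 0 := funext fun j => by
    rw [mulVec, dotProduct_comm]; exact hg0 j
  exact sub_eq_zero.mp (eq_zero_of_mulVec_eq_zero (ne_of_mem_of_not_mem hdet hC0) hker)
end

section
/- Let Ā be an m × m matrix with positive diagonal entries, nonpositive off-diagonal entries, and suppose eᵀĀ ≥ d·eᵀ for some d > 0, where e is the all-ones vector. Let E be obtained from the identity by replacing entry (j,m) with -Ā_{j,m}/Ā_{m,m} for j < m, and let Ā' be the (m-1) × (m-1) matrix obtained from EĀ by deleting row m and column m. Then eᵀĀ' ≥ d·eᵀ entrywise (with e now of length m-1). -/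
/-!
After eliminating the entries above the pivot `Ā_{m,m}`, column `j` of the leading
`(m-1) × (m-1)` block sums to `eᵀ Ā_{·j} - (Ā_{m,j} / Ā_{m,m}) · eᵀ Ā_{·m}`: the dropped row-`m`
entry `Ā_{m,j}` is exactly cancelled by the pivot's own term in `eᵀ Ā_{·m}`. For `j < m` the factor
`Ā_{m,j} / Ā_{m,m}` is nonpositive and `eᵀ Ā_{·m} ≥ d > 0`, so the column sum can only grow.
-/

namespace Matrix

variable {K : Type*} [Field K] {m : ℕ}

def lastPivotElimination (A : Matrix (Fin (m + 1)) (Fin (m + 1)) K) :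
    Matrix (Fin (m + 1)) (Fin (m + 1)) K :=
  of fun i j =>
    if i = j then 1
    else if j = Fin.last m then -A i (Fin.last m) / A (Fin.last m) (Fin.last m)
    else 0

theorem lastPivotElimination_mul_apply_castSucc (A : Matrix (Fin (m + 1)) (Fin (m + 1)) K)
    (i : Fin m) (j : Fin (m + 1)) :
    (lastPivotElimination A * A) i.castSucc j =
      A i.castSucc j - A i.castSucc (Fin.last m) / A (Fin.last m) (Fin.last m) * A (Fin.last m) j := by
  rw [mul_apply, Fin.sum_univ_castSucc]
  simp only [lastPivotElimination, of_apply, Fin.castSucc_inj, (Fin.castSucc_lt_last _).ne,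
    if_false, if_true, ite_mul, one_mul, zero_mul, Finset.sum_ite_eq, Finset.mem_univ]
  ring

theorem sum_lastPivotElimination_mul_apply_castSucc (A : Matrix (Fin (m + 1)) (Fin (m + 1)) K)
    (hpivot : A (Fin.last m) (Fin.last m) ≠ 0) (j : Fin (m + 1)) :
    ∑ i : Fin m, (lastPivotElimination A * A) i.castSucc j =
      ∑ i, A i j - A (Fin.last m) j / A (Fin.last m) (Fin.last m) * ∑ i, A i (Fin.last m) := by
  simp only [lastPivotElimination_mul_apply_castSucc, Finset.sum_sub_distrib, ← Finset.sum_mul,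
    ← Finset.sum_div, Fin.sum_univ_castSucc (f := fun i => A i _)]
  field_simp
  ring

end Matrix

open Matrix in
/-- Column-sum preservation under the pivot elimination step: deleting the last
row and column of `EĀ` keeps all column sums at least `d`. -/
theorem column_sums_preserved_by_elimination (m : ℕ) (d : ℝ) (hd : 0 < d)
    (A : Matrix (Fin (m + 1)) (Fin (m + 1)) ℝ)
    (hdiag : ∀ i, 0 < A i i)
    (hoff : ∀ i j, i ≠ j → A i j ≤ 0)
    (hsum : ∀ j, d ≤ ∑ i, A i j) :
    ∀ j : Fin m, d ≤ ∑ i : Fin m,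
      ((Matrix.of fun i' j' =>
          (if i' = j' then (1 : ℝ)
           else if j' = Fin.last m then -A i' (Fin.last m) / A (Fin.last m) (Fin.last m)
           else 0) : Matrix (Fin (m + 1)) (Fin (m + 1)) ℝ) * A).submatrix
        Fin.castSucc Fin.castSucc i j := by
  intro j
  have hpivot : 0 < A (Fin.last m) (Fin.last m) := hdiag _
  have hratio : A (Fin.last m) j.castSucc / A (Fin.last m) (Fin.last m) ≤ 0 :=
    div_nonpos_of_nonpos_of_nonneg (hoff _ _ (Fin.castSucc_lt_last j).ne') hpivot.le
  have hlast : 0 ≤ ∑ i, A i (Fin.last m) := hd.le.trans (hsum _)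
  change d ≤ ∑ i : Fin m, (lastPivotElimination A * A) i.castSucc j.castSucc
  rw [sum_lastPivotElimination_mul_apply_castSucc A hpivot.ne']
  linarith [hsum j.castSucc, mul_nonpos_of_nonpos_of_nonneg hratio hlast]
end
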